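/- Let n ≥ 2 and m ≥ 2 be integers, k a field of characteristic prime to d, and f(x₁,…,x_n), g(y₁,…,y_m) homogeneous forms of the same degree d with coefficients in k whose vanishing defines smooth hypersurfaces. Let X_f ⊂ P^n_k be the smooth hypersurface defined by f(x₁,…,x_n) + x₀^d = 0 and X_g ⊂ P^m_k the smooth hypersurface defined by g(y₁,…,y_m) + y₀^d = 0. Then the rational map from P^n_k ×_k P^m_k to P^{n+m−1}_k sending the point with bihomogeneous coordinates (x₀,…,x_n; y₀,…,y_m) to the point with homogeneous coordinates (x₁/x₀,…,x_n/x₀, y₁/y₀,…,y_m/y₀) induces a dominant rational map of degree d from X_f ×_k X_g onto the smooth hypersurface in P^{n+m−1}_k defined by f(z₁,…,z_n) − g(z_{n+1},…,z_{n+m}) = 0. -/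

import Mathlib

open MvPolynomial

noncomputable section

namespace Stmt2

/-- Jacobian criterion over a field `L` : `{f = 0}` defines a smooth hypersurface. -/
def JacSmoothF {L : Type} [Field L] {N : ℕ} (f : MvPolynomial (Fin N) L) : Prop :=
  ∀ v : Fin N → L, v ≠ 0 → eval v f = 0 → ∃ i, eval v (pderiv i f) ≠ 0

/-- The Shioda–Katsura map on homogeneous coordinates : it sends
`((x₀ : … : xₙ), (y₀ : … : y_m))` to `(x₁/x₀, …, xₙ/x₀, y₁/y₀, …, y_m/y₀)`, written with
the homogeneous coordinates `(x₁ y₀, …, xₙ y₀, x₀ y₁, …, x₀ y_m)`. -/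
def psiVec {K : Type} [Field K] {n m : ℕ} (x : Fin (n + 1) → K) (y : Fin (m + 1) → K) :
    Fin (n + m) → K :=
  fun p => Fin.addCases (fun i => x i.succ * y 0) (fun j => y j.succ * x 0) p

/-- The fibre of the Shioda–Katsura rational map `X_f ×_k X_g ⇢ Z` over a point `z`. -/
def psiFiber {K : Type} [Field K] {n m : ℕ} (Ff : MvPolynomial (Fin (n + 1)) K)
    (Gg : MvPolynomial (Fin (m + 1)) K) (z : Projectivization K (Fin (n + m) → K)) :
    Set (Projectivization K (Fin (n + 1) → K) × Projectivization K (Fin (m + 1) → K)) :=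
  {pq | eval pq.1.rep Ff = 0 ∧ eval pq.2.rep Gg = 0 ∧
    ∃ hne : psiVec pq.1.rep pq.2.rep ≠ 0, Projectivization.mk K _ hne = z}

end Stmt2

/-! On `X_f × X_g` the map is `((x₀ : x), (y₀ : y)) ↦ (y₀ x : x₀ y)`, and
`f (y₀ x) - g (x₀ y) = y₀ᵈ f x - x₀ᵈ g y = y₀ᵈ (-x₀ᵈ) - x₀ᵈ (-y₀ᵈ) = 0`. Over a point `(a : b)`
of `Z` with `c = f a = g b ≠ 0`, the preimages are exactly the pairs `((1 : t a), (1 : t b))`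
with `tᵈ = -c⁻¹`; there are `d` of them because `d` is invertible, so `Xᵈ + c⁻¹` is separable.
`X_f` is smooth because off `x₀ = 0` the derivative `d x₀ᵈ⁻¹` in `x₀` is nonzero, and `Z` is
smooth because, by Euler's identity `∑ xᵢ ∂ᵢ f = d f`, the gradient of a smooth form of degree
`d` vanishes nowhere off the origin. -/

namespace MvPolynomial.IsHomogeneous

section CommSemiring

variable {σ R : Type*} [CommSemiring R] {φ : MvPolynomial σ R} {d : ℕ}

theorem eval_smul (hφ : φ.IsHomogeneous d) (c : R) (v : σ → R) :
    eval (c • v) φ = c ^ d * eval v φ := by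
  rw [eval_eq, eval_eq, Finset.mul_sum]
  refine Finset.sum_congr rfl fun s hs => ?_
  have hdeg : ∑ i ∈ s.support, s i = d := by
    rw [← hφ (mem_support_iff.mp hs), Finsupp.weight_apply, Finsupp.sum]
    simp
  simp only [Pi.smul_apply, smul_eq_mul, mul_pow, Finset.prod_mul_distrib,
    Finset.prod_pow_eq_pow_sum, hdeg]
  ring

theorem eval_zero (hφ : φ.IsHomogeneous d) (hd : d ≠ 0) : eval (0 : σ → R) φ = 0 := by
  simpa [hd] using hφ.eval_smul 0 0

theorem sum_mul_eval_pderiv [Fintype σ] (hφ : φ.IsHomogeneous d) (v : σ → R) :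
    ∑ i, v i * eval v (pderiv i φ) = d * eval v φ := by
  simpa [nsmul_eq_mul] using congrArg (eval v) hφ.sum_X_mul_pderiv

theorem eval_smul_eq_zero_iff [NoZeroDivisors R] (hφ : φ.IsHomogeneous d) {c : R} (hc : c ≠ 0)
    (v : σ → R) : eval (c • v) φ = 0 ↔ eval v φ = 0 := by
  rw [hφ.eval_smul, mul_eq_zero, or_iff_right (pow_ne_zero d hc)]

end CommSemiring

variable {σ K : Type*} [Field K] {φ : MvPolynomial σ K} {d : ℕ}

theorem eval_rep_mk_eq_zero_iff (hφ : φ.IsHomogeneous d) {v : σ → K} (hv : v ≠ 0) :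
    eval (Projectivization.mk K v hv).rep φ = 0 ↔ eval v φ = 0 := by
  obtain ⟨a, ha⟩ := Projectivization.exists_smul_eq_mk_rep K v hv
  rw [← ha, Units.smul_def, hφ.eval_smul_eq_zero_iff a.ne_zero]

theorem surjective_eval [IsAlgClosed K] (hφ : φ.IsHomogeneous d) (hd : d ≠ 0)
    (h : ∃ v, eval v φ ≠ 0) : Function.Surjective fun v => eval v φ := by
  obtain ⟨v, hv⟩ := h
  intro c
  obtain ⟨t, ht⟩ := IsAlgClosed.exists_pow_nat_eq (c / eval v φ) (Nat.pos_of_ne_zero hd)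
  exact ⟨t • v, by simp only [hφ.eval_smul, ht, div_mul_cancel₀ _ hv]⟩

end MvPolynomial.IsHomogeneous

open Polynomial in
theorem card_nthRootsFinset_of_isAlgClosed {K : Type*} [Field K] [IsAlgClosed K] {d : ℕ}
    (hd : (d : K) ≠ 0) {e : K} (he : e ≠ 0) : (nthRootsFinset d e).card = d := by
  classical
  rw [nthRootsFinset_def, nthRoots,
    Multiset.toFinset_card_of_nodup (nodup_roots (separable_X_pow_sub_C e hd he)),
    ← (IsAlgClosed.splits _).natDegree_eq_card_roots, natDegree_X_pow_sub_C]

theorem Fin.cons_one_ne_zero {α : Type*} [Zero α] [One α] [NeZero (1 : α)] {N : ℕ}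
    (v : Fin N → α) : (Fin.cons 1 v : Fin (N + 1) → α) ≠ 0 :=
  fun h => one_ne_zero (congrFun h 0)

theorem Projectivization.mk_eq_mk_cons_one {K : Type*} [Field K] {N : ℕ}
    {x : Fin (N + 1) → K} (hx : x ≠ 0) {v : Fin N → K}
    (h : x ∘ Fin.succ = x 0 • v) :
    Projectivization.mk K x hx = Projectivization.mk K (Fin.cons 1 v) (Fin.cons_one_ne_zero v) := by
  refine (Projectivization.mk_eq_mk_iff' K _ _ _ _).mpr ⟨x 0, funext fun i => ?_⟩
  induction i using Fin.cases with
  | zero => simp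
  | succ i => simpa using (congrFun h i).symm

namespace Stmt2

section Forms

variable {R S : Type*} {n m d : ℕ}

section CommSemiring

variable [CommSemiring R] [CommSemiring S]

def cyclicCoverForm (f : MvPolynomial (Fin n) R) (d : ℕ) : MvPolynomial (Fin (n + 1)) R :=
  rename Fin.succ f + X 0 ^ d

theorem eval_cyclicCoverForm (f : MvPolynomial (Fin n) R) (x : Fin (n + 1) → R) :
    eval x (cyclicCoverForm f d) = eval (x ∘ Fin.succ) f + x 0 ^ d := by
  rw [cyclicCoverForm, map_add, eval_rename, map_pow, eval_X]

theorem _root_.MvPolynomial.IsHomogeneous.cyclicCoverForm {f : MvPolynomial (Fin n) R}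
    (hf : f.IsHomogeneous d) : (cyclicCoverForm f d).IsHomogeneous d :=
  hf.rename_isHomogeneous.add (by simpa using isHomogeneous_X_pow (0 : Fin (n + 1)) d)

theorem map_cyclicCoverForm (φ : R →+* S) (f : MvPolynomial (Fin n) R) :
    map φ (cyclicCoverForm f d) = cyclicCoverForm (map φ f) d := by
  rw [cyclicCoverForm, cyclicCoverForm, map_add, map_rename, map_pow, map_X]

end CommSemiring

section CommRing

variable [CommRing R] [CommRing S]

def diffForm (f : MvPolynomial (Fin n) R) (g : MvPolynomial (Fin m) R) :
    MvPolynomial (Fin (n + m)) R :=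
  rename (Fin.castAdd m) f - rename (Fin.natAdd n) g

theorem eval_diffForm (f : MvPolynomial (Fin n) R) (g : MvPolynomial (Fin m) R)
    (w : Fin (n + m) → R) :
    eval w (diffForm f g) = eval (w ∘ Fin.castAdd m) f - eval (w ∘ Fin.natAdd n) g := by
  rw [diffForm, map_sub, eval_rename, eval_rename]

theorem _root_.MvPolynomial.IsHomogeneous.diffForm {f : MvPolynomial (Fin n) R}
    {g : MvPolynomial (Fin m) R} (hf : f.IsHomogeneous d) (hg : g.IsHomogeneous d) :
    (diffForm f g).IsHomogeneous d :=
  hf.rename_isHomogeneous.sub hg.rename_isHomogeneous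

theorem map_diffForm (φ : R →+* S) (f : MvPolynomial (Fin n) R) (g : MvPolynomial (Fin m) R) :
    map φ (diffForm f g) = diffForm (map φ f) (map φ g) := by
  rw [diffForm, diffForm, map_sub, map_rename, map_rename]

end CommRing

end Forms

variable {K : Type} [Field K] {n m d : ℕ}

namespace JacSmoothF

theorem exists_eval_ne_zero [Infinite K] {f : MvPolynomial (Fin n) K} (hn : n ≠ 0)
    (hf : JacSmoothF f) : ∃ v, eval v f ≠ 0 := by
  by_contra! h
  have hf0 : f = 0 := MvPolynomial.funext fun v => by rw [h v, map_zero]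
  have hone : (fun _ => 1 : Fin n → K) ≠ 0 := fun h1 =>
    one_ne_zero (congrFun h1 ⟨0, Nat.pos_of_ne_zero hn⟩)
  obtain ⟨i, hi⟩ := hf _ hone (h _)
  simp [hf0] at hi

theorem exists_eval_pderiv_ne_zero {f : MvPolynomial (Fin n) K} (hd : (d : K) ≠ 0)
    (hf : f.IsHomogeneous d) (hsm : JacSmoothF f) {v : Fin n → K} (hv : v ≠ 0) :
    ∃ i, eval v (pderiv i f) ≠ 0 := by
  by_cases hfv : eval v f = 0
  · exact hsm v hv hfv
  · by_contra! h
    have := hf.sum_mul_eval_pderiv v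
    simp only [h, mul_zero, Finset.sum_const_zero] at this
    exact mul_ne_zero hd hfv this.symm

theorem cyclicCoverForm {f : MvPolynomial (Fin n) K} (hd : (d : K) ≠ 0) (hsm : JacSmoothF f) :
    JacSmoothF (cyclicCoverForm f d) := by
  have hd0 : d ≠ 0 := by rintro rfl; exact hd Nat.cast_zero
  intro v hv hev
  rw [eval_cyclicCoverForm] at hev
  by_cases h0 : v 0 = 0
  · have hvs : v ∘ Fin.succ ≠ 0 := fun h => hv (funext fun i => Fin.cases h0 (congrFun h) i)
    rw [h0, zero_pow hd0, add_zero] at hev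
    obtain ⟨i, hi⟩ := hsm _ hvs hev
    refine ⟨i.succ, ?_⟩
    rwa [Stmt2.cyclicCoverForm, map_add, pderiv_rename (Fin.succ_injective _), pderiv_pow,
      pderiv_X_of_ne (Fin.succ_ne_zero i).symm, mul_zero, add_zero, eval_rename]
  · refine ⟨0, ?_⟩
    have hvars : (0 : Fin (n + 1)) ∉ (rename Fin.succ f).vars := fun h => by
      obtain ⟨j, -, hj⟩ := Finset.mem_image.mp (vars_rename _ _ h)
      exact Fin.succ_ne_zero j hj
    rw [Stmt2.cyclicCoverForm, map_add, pderiv_eq_zero_of_notMem_vars hvars, zero_add,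
      pderiv_pow, pderiv_X_self, mul_one, map_mul, map_pow, eval_X, map_natCast]
    exact mul_ne_zero hd (pow_ne_zero _ h0)

theorem diffForm {f : MvPolynomial (Fin n) K} {g : MvPolynomial (Fin m) K} (hd : (d : K) ≠ 0)
    (hf : f.IsHomogeneous d) (hg : g.IsHomogeneous d) (hfsm : JacSmoothF f)
    (hgsm : JacSmoothF g) : JacSmoothF (diffForm f g) := by
  intro v hv _
  have hne (i : Fin n) (j : Fin m) : Fin.castAdd m i ≠ Fin.natAdd n j := by
    simp only [ne_eq, Fin.ext_iff, Fin.val_castAdd, Fin.val_natAdd]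
    omega
  have hvars_f (j : Fin m) : Fin.natAdd n j ∉ (rename (Fin.castAdd m) f).vars := fun h => by
    obtain ⟨i, -, hi⟩ := Finset.mem_image.mp (vars_rename _ _ h)
    exact hne i j hi
  have hvars_g (i : Fin n) : Fin.castAdd m i ∉ (rename (Fin.natAdd n) g).vars := fun h => by
    obtain ⟨j, -, hj⟩ := Finset.mem_image.mp (vars_rename _ _ h)
    exact hne i j hj.symm
  by_cases ha : v ∘ Fin.castAdd m = 0
  · have hb : v ∘ Fin.natAdd n ≠ 0 := fun hb =>
      hv (funext fun p => Fin.addCases (congrFun ha) (congrFun hb) p)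
    obtain ⟨j, hj⟩ := exists_eval_pderiv_ne_zero hd hg hgsm hb
    refine ⟨Fin.natAdd n j, ?_⟩
    rwa [Stmt2.diffForm, map_sub, pderiv_eq_zero_of_notMem_vars (hvars_f j), zero_sub,
      pderiv_rename (Fin.natAdd_injective m n), map_neg, eval_rename, neg_ne_zero]
  · obtain ⟨i, hi⟩ := exists_eval_pderiv_ne_zero hd hf hfsm ha
    refine ⟨Fin.castAdd m i, ?_⟩
    rwa [Stmt2.diffForm, map_sub, pderiv_eq_zero_of_notMem_vars (hvars_g i), sub_zero,
      pderiv_rename (Fin.castAdd_injective n m), eval_rename]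

end JacSmoothF

section psiVec

variable (x : Fin (n + 1) → K) (y : Fin (m + 1) → K)

theorem psiVec_comp_castAdd : psiVec x y ∘ Fin.castAdd m = y 0 • (x ∘ Fin.succ) := by
  funext i
  simp [psiVec, mul_comm]

theorem psiVec_comp_natAdd : psiVec x y ∘ Fin.natAdd n = x 0 • (y ∘ Fin.succ) := by
  funext j
  simp [psiVec, mul_comm]

theorem psiVec_smul (c c' : K) : psiVec (c • x) (c' • y) = (c * c') • psiVec x y := by
  funext p
  induction p using Fin.addCases with
  | left i => simp only [psiVec, Fin.addCases_left, Pi.smul_apply, smul_eq_mul]; ring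
  | right j => simp only [psiVec, Fin.addCases_right, Pi.smul_apply, smul_eq_mul]; ring

end psiVec

theorem psiVec_cons_one (w : Fin (n + m) → K) (t : K) :
    psiVec (Fin.cons 1 (t • (w ∘ Fin.castAdd m))) (Fin.cons 1 (t • (w ∘ Fin.natAdd n))) =
      t • w := by
  funext p
  induction p using Fin.addCases with
  | left i => simp [psiVec]
  | right j => simp [psiVec]

theorem eval_psiVec_diffForm {f : MvPolynomial (Fin n) K} {g : MvPolynomial (Fin m) K}
    (hf : f.IsHomogeneous d) (hg : g.IsHomogeneous d) {x : Fin (n + 1) → K}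
    {y : Fin (m + 1) → K} (hx : eval x (cyclicCoverForm f d) = 0)
    (hy : eval y (cyclicCoverForm g d) = 0) : eval (psiVec x y) (diffForm f g) = 0 := by
  rw [eval_cyclicCoverForm, add_eq_zero_iff_eq_neg] at hx hy
  rw [eval_diffForm, psiVec_comp_castAdd, psiVec_comp_natAdd, hf.eval_smul, hg.eval_smul, hx, hy]
  ring

def fiberParam (z : Projectivization K (Fin (n + m) → K)) (t : K) :
    Projectivization K (Fin (n + 1) → K) × Projectivization K (Fin (m + 1) → K) :=
  (Projectivization.mk K _ (Fin.cons_one_ne_zero (t • (z.rep ∘ Fin.castAdd m))),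
    Projectivization.mk K _ (Fin.cons_one_ne_zero (t • (z.rep ∘ Fin.natAdd n))))

theorem fiberParam_injective {z : Projectivization K (Fin (n + m) → K)}
    (ha : z.rep ∘ Fin.castAdd m ≠ 0) : Function.Injective (fiberParam z) := by
  intro t₁ t₂ h
  obtain ⟨u, hu⟩ := (Projectivization.mk_eq_mk_iff' K _ _ _ _).mp (congrArg Prod.fst h)
  have hu1 : u = 1 := by simpa using congrFun hu 0
  obtain ⟨i, hi⟩ := Function.ne_iff.mp ha
  have := congrFun hu i.succ
  simp only [hu1, one_mul, Fin.cons_succ, Pi.smul_apply, smul_eq_mul] at this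
  exact (mul_right_cancel₀ hi this).symm

theorem eval_cons_one_cyclicCoverForm {f : MvPolynomial (Fin n) K} (hf : f.IsHomogeneous d)
    (t : K) (a : Fin n → K) :
    eval (Fin.cons 1 (t • a)) (cyclicCoverForm f d) = t ^ d * eval a f + 1 := by
  rw [eval_cyclicCoverForm, Fin.cons_comp_succ, hf.eval_smul, Fin.cons_zero, one_pow]

section Fiber

variable {f : MvPolynomial (Fin n) K} {g : MvPolynomial (Fin m) K}
  {z : Projectivization K (Fin (n + m) → K)}

theorem fiberParam_mem_psiFiber (hd : d ≠ 0) (hf : f.IsHomogeneous d) (hg : g.IsHomogeneous d)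
    (hz : eval z.rep (diffForm f g) = 0) {t : K}
    (ht : t ^ d * eval (z.rep ∘ Fin.castAdd m) f = -1) :
    fiberParam z t ∈ psiFiber (cyclicCoverForm f d) (cyclicCoverForm g d) z := by
  rw [eval_diffForm, sub_eq_zero] at hz
  have ht0 : t ≠ 0 := by rintro rfl; simp [hd] at ht
  obtain ⟨u₁, hu₁⟩ := Projectivization.exists_smul_eq_mk_rep K _
    (Fin.cons_one_ne_zero (t • (z.rep ∘ Fin.castAdd m)))
  obtain ⟨u₂, hu₂⟩ := Projectivization.exists_smul_eq_mk_rep K _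
    (Fin.cons_one_ne_zero (t • (z.rep ∘ Fin.natAdd n)))
  refine ⟨?_, ?_, ?_⟩
  · rw [fiberParam, hf.cyclicCoverForm.eval_rep_mk_eq_zero_iff, eval_cons_one_cyclicCoverForm hf,
      ht, neg_add_cancel]
  · rw [fiberParam, hg.cyclicCoverForm.eval_rep_mk_eq_zero_iff, eval_cons_one_cyclicCoverForm hg,
      ← hz, ht, neg_add_cancel]
  · have hpsi : psiVec (fiberParam z t).1.rep (fiberParam z t).2.rep = (u₁ * u₂ * t) • z.rep := by
      dsimp only [fiberParam]
      rw [← hu₁, ← hu₂, Units.smul_def, Units.smul_def, psiVec_smul, psiVec_cons_one, smul_smul]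
    have hc : (u₁ * u₂ * t : K) ≠ 0 := by simp [ht0]
    have hne : psiVec (fiberParam z t).1.rep (fiberParam z t).2.rep ≠ 0 := by
      rw [hpsi]; exact smul_ne_zero hc z.rep_nonzero
    refine ⟨hne, ?_⟩
    conv_rhs => rw [← z.mk_rep]
    exact (Projectivization.mk_eq_mk_iff' K _ _ _ _).mpr ⟨_, hpsi.symm⟩

theorem exists_fiberParam_eq_of_mem_psiFiber (hd : d ≠ 0) (hf : f.IsHomogeneous d)
    (hg : g.IsHomogeneous d) (hz : eval z.rep (diffForm f g) = 0)
    (hc : eval (z.rep ∘ Fin.castAdd m) f ≠ 0) {p : Projectivization K (Fin (n + 1) → K)}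
    {q : Projectivization K (Fin (m + 1) → K)}
    (hpq : (p, q) ∈ psiFiber (cyclicCoverForm f d) (cyclicCoverForm g d) z) :
    ∃ t, t ^ d * eval (z.rep ∘ Fin.castAdd m) f = -1 ∧ fiberParam z t = (p, q) := by
  obtain ⟨hp, -, hne, hmk⟩ := hpq
  rw [eval_diffForm, sub_eq_zero] at hz
  have hb : z.rep ∘ Fin.natAdd n ≠ 0 := fun h => hc (by rw [hz, h, hg.eval_zero hd])
  obtain ⟨u, hu⟩ := (Projectivization.mk_eq_mk_iff' K _ _ hne z.rep_nonzero).mp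
    (hmk.trans z.mk_rep.symm)
  have hua : u • (z.rep ∘ Fin.castAdd m) = q.rep 0 • (p.rep ∘ Fin.succ) := by
    rw [← psiVec_comp_castAdd, ← hu]; rfl
  have hub : u • (z.rep ∘ Fin.natAdd n) = p.rep 0 • (q.rep ∘ Fin.succ) := by
    rw [← psiVec_comp_natAdd, ← hu]; rfl
  have hu0 : u ≠ 0 := by rintro rfl; exact hne (by rw [← hu, zero_smul])
  have hp0 : p.rep 0 ≠ 0 := fun h => by
    rw [h, zero_smul, smul_eq_zero] at hub
    exact hb (hub.resolve_left hu0)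
  have hq0 : q.rep 0 ≠ 0 := fun h => by
    rw [h, zero_smul, smul_eq_zero] at hua
    exact hc (by rw [hua.resolve_left hu0, hf.eval_zero hd])
  obtain ⟨t, ht⟩ : ∃ t, u = p.rep 0 * q.rep 0 * t := ⟨u / (p.rep 0 * q.rep 0), by field_simp⟩
  have hpt : p = Projectivization.mk K _ (Fin.cons_one_ne_zero (t • (z.rep ∘ Fin.castAdd m))) := by
    conv_lhs => rw [← p.mk_rep]
    refine Projectivization.mk_eq_mk_cons_one _ ?_
    rw [smul_smul, ← inv_smul_smul₀ hq0 (p.rep ∘ Fin.succ), ← hua, smul_smul, ht]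
    field_simp
  have hqt : q = Projectivization.mk K _ (Fin.cons_one_ne_zero (t • (z.rep ∘ Fin.natAdd n))) := by
    conv_lhs => rw [← q.mk_rep]
    refine Projectivization.mk_eq_mk_cons_one _ ?_
    rw [smul_smul, ← inv_smul_smul₀ hp0 (q.rep ∘ Fin.succ), ← hub, smul_smul, ht]
    field_simp
  refine ⟨t, ?_, Prod.ext hpt.symm hqt.symm⟩
  rw [hpt, hf.cyclicCoverForm.eval_rep_mk_eq_zero_iff, eval_cons_one_cyclicCoverForm hf] at hp
  linear_combination hp

theorem psiFiber_eq_image (hd : d ≠ 0) (hf : f.IsHomogeneous d) (hg : g.IsHomogeneous d)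
    (hz : eval z.rep (diffForm f g) = 0)
    (hc : eval (z.rep ∘ Fin.castAdd m) f ≠ 0) :
    psiFiber (cyclicCoverForm f d) (cyclicCoverForm g d) z =
      fiberParam z '' {t | t ^ d * eval (z.rep ∘ Fin.castAdd m) f = -1} := by
  ext ⟨p, q⟩
  constructor
  · exact exists_fiberParam_eq_of_mem_psiFiber hd hf hg hz hc
  · rintro ⟨t, ht, htpq⟩
    exact htpq ▸ fiberParam_mem_psiFiber hd hf hg hz ht

theorem psiFiber_finite_and_ncard_eq [IsAlgClosed K] (hd : (d : K) ≠ 0)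
    (hf : f.IsHomogeneous d) (hg : g.IsHomogeneous d)
    (hz : eval z.rep (diffForm f g) = 0) (hc : eval (z.rep ∘ Fin.castAdd m) f ≠ 0) :
    (psiFiber (cyclicCoverForm f d) (cyclicCoverForm g d) z).Finite ∧
      (psiFiber (cyclicCoverForm f d) (cyclicCoverForm g d) z).ncard = d := by
  have hd0 : d ≠ 0 := by rintro rfl; exact hd Nat.cast_zero
  have ha : z.rep ∘ Fin.castAdd m ≠ 0 := fun h => hc (by rw [h, hf.eval_zero hd0])
  have hroots : {t | t ^ d * eval (z.rep ∘ Fin.castAdd m) f = -1} =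
      ↑(Polynomial.nthRootsFinset d (-(eval (z.rep ∘ Fin.castAdd m) f)⁻¹)) := by
    rw [Polynomial.nthRootsFinset_toSet (Nat.pos_of_ne_zero hd0)]
    ext t
    rw [Set.mem_ofPred_eq, Set.mem_ofPred_eq, ← eq_mul_inv_iff_mul_eq₀ hc, neg_one_mul]
  rw [psiFiber_eq_image hd0 hf hg hz hc, hroots]
  refine ⟨(Finset.finite_toSet _).image _, ?_⟩
  rw [Set.ncard_image_of_injective _ (fiberParam_injective ha), Set.ncard_coe_finset,
    card_nthRootsFinset_of_isAlgClosed hd (neg_ne_zero.mpr (inv_ne_zero hc))]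

theorem exists_eval_diffForm_eq_zero_and_ne_zero [IsAlgClosed K] (hd : d ≠ 0)
    (hf : f.IsHomogeneous d) (hg : g.IsHomogeneous d) (hf0 : ∃ a, eval a f ≠ 0)
    (hg0 : ∃ b, eval b g ≠ 0) :
    ∃ z : Projectivization K (Fin (n + m) → K),
      eval z.rep (diffForm f g) = 0 ∧ eval z.rep (rename (Fin.castAdd m) f) ≠ 0 := by
  obtain ⟨a, ha⟩ := hf0
  obtain ⟨b, hb⟩ : ∃ b, eval b g = eval a f := hg.surjective_eval hd hg0 _
  have hwa : Fin.append a b ∘ Fin.castAdd m = a := funext (Fin.append_left a b)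
  have hwb : Fin.append a b ∘ Fin.natAdd n = b := funext (Fin.append_right a b)
  have hw : Fin.append a b ≠ 0 := fun h => ha (by rw [← hwa, h]; exact hf.eval_zero hd)
  refine ⟨Projectivization.mk K _ hw, ?_, ?_⟩
  · rw [(hf.diffForm hg).eval_rep_mk_eq_zero_iff, eval_diffForm, hwa, hwb, hb, sub_self]
  · rwa [ne_eq, hf.rename_isHomogeneous.eval_rep_mk_eq_zero_iff, eval_rename, hwa]

end Fiber

end Stmt2

open Stmt2 in
theorem stmt2_general (k : Type) [Field k] (n m d : ℕ) (hn : 2 ≤ n) (hm : 2 ≤ m)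
    (hchar : (d : k) ≠ 0)
    (f : MvPolynomial (Fin n) k) (g : MvPolynomial (Fin m) k)
    (hf : f.IsHomogeneous d) (hg : g.IsHomogeneous d)
    (hfsm : JacSmoothF (MvPolynomial.map (algebraMap k (AlgebraicClosure k)) f))
    (hgsm : JacSmoothF (MvPolynomial.map (algebraMap k (AlgebraicClosure k)) g))
    (Ff : MvPolynomial (Fin (n + 1)) k) (hFf : Ff = rename Fin.succ f + X 0 ^ d)
    (Gg : MvPolynomial (Fin (m + 1)) k) (hGg : Gg = rename Fin.succ g + X 0 ^ d)
    (Z : MvPolynomial (Fin (n + m)) k)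
    (hZ : Z = rename (Fin.castAdd m) f - rename (Fin.natAdd n) g) :
    JacSmoothF (MvPolynomial.map (algebraMap k (AlgebraicClosure k)) Ff) ∧
    JacSmoothF (MvPolynomial.map (algebraMap k (AlgebraicClosure k)) Gg) ∧
    JacSmoothF (MvPolynomial.map (algebraMap k (AlgebraicClosure k)) Z) ∧
    (∀ (x : Fin (n + 1) → AlgebraicClosure k) (y : Fin (m + 1) → AlgebraicClosure k),
      eval x (MvPolynomial.map (algebraMap k (AlgebraicClosure k)) Ff) = 0 →
      eval y (MvPolynomial.map (algebraMap k (AlgebraicClosure k)) Gg) = 0 →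
      eval (psiVec x y) (MvPolynomial.map (algebraMap k (AlgebraicClosure k)) Z) = 0) ∧
    ∃ H : MvPolynomial (Fin (n + m)) (AlgebraicClosure k), (∃ dH, H.IsHomogeneous dH) ∧
      (∃ z : Projectivization (AlgebraicClosure k) (Fin (n + m) → AlgebraicClosure k),
        eval z.rep (MvPolynomial.map (algebraMap k (AlgebraicClosure k)) Z) = 0 ∧
          eval z.rep H ≠ 0) ∧
      ∀ z : Projectivization (AlgebraicClosure k) (Fin (n + m) → AlgebraicClosure k),
        eval z.rep (MvPolynomial.map (algebraMap k (AlgebraicClosure k)) Z) = 0 →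
        eval z.rep H ≠ 0 →
          (psiFiber (MvPolynomial.map (algebraMap k (AlgebraicClosure k)) Ff)
            (MvPolynomial.map (algebraMap k (AlgebraicClosure k)) Gg) z).Finite ∧
          (psiFiber (MvPolynomial.map (algebraMap k (AlgebraicClosure k)) Ff)
            (MvPolynomial.map (algebraMap k (AlgebraicClosure k)) Gg) z).ncard = d := by
  set φ := algebraMap k (AlgebraicClosure k)
  have hdK : (d : AlgebraicClosure k) ≠ 0 := by rwa [← map_natCast φ, map_ne_zero]
  have hd0 : d ≠ 0 := by rintro rfl; exact hchar Nat.cast_zero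
  have hf' := hf.map φ
  have hg' := hg.map φ
  have hFf' : map φ Ff = cyclicCoverForm (map φ f) d := by rw [hFf]; exact map_cyclicCoverForm φ f
  have hGg' : map φ Gg = cyclicCoverForm (map φ g) d := by rw [hGg]; exact map_cyclicCoverForm φ g
  have hZ' : map φ Z = diffForm (map φ f) (map φ g) := by rw [hZ]; exact map_diffForm φ f g
  rw [hFf', hGg', hZ']
  refine ⟨hfsm.cyclicCoverForm hdK, hgsm.cyclicCoverForm hdK, hfsm.diffForm hdK hf' hg' hgsm,
    fun x y => eval_psiVec_diffForm hf' hg', rename (Fin.castAdd m) (map φ f),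
    ⟨d, hf'.rename_isHomogeneous⟩, ?_, fun z hz hH => ?_⟩
  · exact exists_eval_diffForm_eq_zero_and_ne_zero hd0 hf' hg'
      (hfsm.exists_eval_ne_zero (by omega)) (hgsm.exists_eval_ne_zero (by omega))
  · rw [eval_rename] at hH
    exact psiFiber_finite_and_ncard_eq hdK hf' hg' hz hH

open Stmt2 in
/-- Shioda–Katsura.  Let `n, m ≥ 2`, let `k` be a field of
characteristic prime to `d`, and let `f (x₁, …, xₙ)`, `g (y₁, …, y_m)` be forms of degree
`d` over `k` defining smooth hypersurfaces.  Let `X_f : f + x₀^d = 0 ⊆ ℙⁿ_k` and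
`X_g : g + y₀^d = 0 ⊆ ℙᵐ_k`.  Then these are smooth hypersurfaces and the map
`(x; y) ↦ (x₁/x₀, …, xₙ/x₀, y₁/y₀, …, y_m/y₀)` induces a dominant rational map of degree
`d` from `X_f ×_k X_g` onto the smooth hypersurface
`Z : f (z₁, …, zₙ) - g (z_{n+1}, …, z_{n+m}) = 0 ⊆ ℙ^{n+m-1}_k` (dominance and the degree
are expressed by counting points in the fibres over a dense open set of `Z`, over an
algebraic closure of `k`). -/
theorem stmt2 (k : Type) [Field k] (n m d : ℕ) (hn : 2 ≤ n) (hm : 2 ≤ m)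
    (hd : 0 < d) (hchar : (d : k) ≠ 0)
    (f : MvPolynomial (Fin n) k) (g : MvPolynomial (Fin m) k)
    (hf : f.IsHomogeneous d) (hg : g.IsHomogeneous d)
    (hfsm : JacSmoothF (MvPolynomial.map (algebraMap k (AlgebraicClosure k)) f))
    (hgsm : JacSmoothF (MvPolynomial.map (algebraMap k (AlgebraicClosure k)) g))
    (Ff : MvPolynomial (Fin (n + 1)) k) (hFf : Ff = rename Fin.succ f + X 0 ^ d)
    (Gg : MvPolynomial (Fin (m + 1)) k) (hGg : Gg = rename Fin.succ g + X 0 ^ d)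
    (Z : MvPolynomial (Fin (n + m)) k)
    (hZ : Z = rename (Fin.castAdd m) f - rename (Fin.natAdd n) g) :
    JacSmoothF (MvPolynomial.map (algebraMap k (AlgebraicClosure k)) Ff) ∧
    JacSmoothF (MvPolynomial.map (algebraMap k (AlgebraicClosure k)) Gg) ∧
    JacSmoothF (MvPolynomial.map (algebraMap k (AlgebraicClosure k)) Z) ∧
    (∀ (x : Fin (n + 1) → AlgebraicClosure k) (y : Fin (m + 1) → AlgebraicClosure k),
      eval x (MvPolynomial.map (algebraMap k (AlgebraicClosure k)) Ff) = 0 →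
      eval y (MvPolynomial.map (algebraMap k (AlgebraicClosure k)) Gg) = 0 →
      eval (psiVec x y) (MvPolynomial.map (algebraMap k (AlgebraicClosure k)) Z) = 0) ∧
    ∃ H : MvPolynomial (Fin (n + m)) (AlgebraicClosure k), (∃ dH, H.IsHomogeneous dH) ∧
      (∃ z : Projectivization (AlgebraicClosure k) (Fin (n + m) → AlgebraicClosure k),
        eval z.rep (MvPolynomial.map (algebraMap k (AlgebraicClosure k)) Z) = 0 ∧
          eval z.rep H ≠ 0) ∧
      ∀ z : Projectivization (AlgebraicClosure k) (Fin (n + m) → AlgebraicClosure k),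
        eval z.rep (MvPolynomial.map (algebraMap k (AlgebraicClosure k)) Z) = 0 →
        eval z.rep H ≠ 0 →
          (psiFiber (MvPolynomial.map (algebraMap k (AlgebraicClosure k)) Ff)
            (MvPolynomial.map (algebraMap k (AlgebraicClosure k)) Gg) z).Finite ∧
          (psiFiber (MvPolynomial.map (algebraMap k (AlgebraicClosure k)) Ff)
            (MvPolynomial.map (algebraMap k (AlgebraicClosure k)) Gg) z).ncard = d :=
  stmt2_general k n m d hn hm hchar f g hf hg hfsm hgsm Ff hFf Gg hGg Z hZ
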